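/- arXiv:2407.01830 — 4 statements merged into one kernel-verified Lean document; each statement's English description precedes it below -/
import Mathlib

section
/- There exists a universal constant K > 0 such that for every finite set Λ₀ ⊂ ℝ and every a : Λ₀ → ℂ one has limsup_{L→∞} (1/(2L)²) ∫_{−L}^{L} ∫_{−L}^{L} | ∑_{λ ∈ Λ₀} a_λ e^{i(λ x − λ² t)} |^4 dx dt ≤ K^4 · ( ∑_{λ ∈ Λ₀} |a_λ|^2 )^2. (Time-averaged L^4 Strichartz estimate for the Schrödinger evolution of Besicovitch almost-periodic data, Theorem 1.2, estimate (1.9).) -/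
/-!
Write `f(x, t) = ∑ a_λ e^{i(λx - λ²t)}`. Then `|f|⁴ = |f²|²`, and `f²` is again a trigonometric
polynomial in `(x, t)`, with coefficient `a_λ a_μ` at the space-time frequency
`(λ + μ, -(λ² + μ²))`. Averaging kills every non-resonant cross term, so the space-time mean of
`|∑ bᵢ e^{i ωᵢ·(x,t)}|²` is `∑_{ωᵢ = ωⱼ} bᵢ b̄ⱼ`, which is at most `k ∑ |bᵢ|²` when every
frequency is shared by at most `k` indices (AM-GM on each resonant pair). Since `λ + μ` and
`λ² + μ²` determine `{λ, μ}`, here `k = 2`, and the mean of `|f|⁴` is at most `2 (∑ |a_λ|²)²`.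
-/

open MeasureTheory Filter Set Complex Finset
open scoped ComplexConjugate Topology

theorem norm_integral_Icc_exp_le {c : ℝ} (hc : c ≠ 0) (L : ℝ) :
    ‖∫ x in Icc (-L) L, exp (I * ↑(c * x))‖ ≤ 2 / |c| := by
  rcases le_or_gt (-L) L with hL | hL
  · have hIc : I * c ≠ 0 := by simp [hc]
    have h_eval : ∫ x in Icc (-L) L, exp (I * ↑(c * x)) =
        (exp (I * c * L) - exp (I * c * ↑(-L))) / (I * c) := by
      rw [integral_Icc_eq_integral_Ioc, ← intervalIntegral.integral_of_le hL,
        ← integral_exp_mul_complex hIc]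
      simp only [ofReal_mul, mul_assoc]
    have h_unit (y : ℝ) : ‖exp (I * c * y)‖ = 1 := by
      rw [mul_assoc, mul_comm, ← ofReal_mul]; exact norm_exp_ofReal_mul_I _
    rw [h_eval, norm_div, norm_mul, norm_I, one_mul, norm_real, Real.norm_eq_abs]
    gcongr
    exact (norm_sub_le _ _).trans_eq (by rw [h_unit, h_unit]; norm_num)
  · rw [Icc_eq_empty hL.not_ge, Measure.restrict_empty, integral_zero_measure, norm_zero]
    positivity

theorem tendsto_mean_integral_Icc_exp (c : ℝ) :
    Tendsto (fun L : ℝ => (∫ x in Icc (-L) L, exp (I * ↑(c * x))) / (2 * L)) atTop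
      (𝓝 (if c = 0 then 1 else 0)) := by
  split_ifs with hc
  · refine tendsto_const_nhds.congr' ?_
    filter_upwards [eventually_gt_atTop 0] with L hL
    have hL' : (L + L : ℂ) ≠ 0 := by exact_mod_cast (by positivity : L + L ≠ 0)
    simp [hc, Real.volume_real_Icc, hL.le, two_mul, hL']
  · have h_decay : Tendsto (fun L : ℝ => 2 / |c| * (2 * L)⁻¹) atTop (𝓝 0) := by
      simpa using (tendsto_inv_atTop_zero.comp (tendsto_id.const_mul_atTop two_pos)).const_mul
        (2 / |c|)
    refine squeeze_zero_norm' ?_ h_decay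
    filter_upwards [eventually_gt_atTop 0] with L hL
    rw [norm_div, div_eq_mul_inv]
    have h_norm : ‖(2 * L : ℂ)‖ = 2 * L := by
      exact_mod_cast Real.norm_of_nonneg (by positivity : 0 ≤ 2 * L)
    rw [h_norm]
    gcongr
    exact norm_integral_Icc_exp_le hc L

theorem integral_Icc_exp_add_mul (ξ τ t L : ℝ) :
    ∫ x in Icc (-L) L, exp (I * ↑(ξ * x + τ * t)) =
      (∫ x in Icc (-L) L, exp (I * ↑(ξ * x))) * exp (I * ↑(τ * t)) := by
  simp only [ofReal_add, mul_add, exp_add, integral_mul_const]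

variable {ι : Type*}

theorem tendsto_mean_integral_sum_exp (s : Finset ι) (b : ι → ℂ) (ω : ι → ℝ × ℝ) :
    Tendsto (fun L : ℝ => (1 / (2 * L) ^ 2 : ℂ) * ∫ t in Icc (-L) L, ∫ x in Icc (-L) L,
        ∑ i ∈ s, b i * exp (I * ↑((ω i).1 * x + (ω i).2 * t))) atTop
      (𝓝 (∑ i ∈ s with ω i = 0, b i)) := by
  set G : ℝ → ℝ → ℂ := fun c L => ∫ x in Icc (-L) L, exp (I * ↑(c * x))
  have h_int (c L : ℝ) : IntegrableOn (fun x : ℝ => exp (I * ↑(c * x))) (Icc (-L) L) :=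
    (by fun_prop : Continuous fun x : ℝ => exp (I * ↑(c * x))).integrableOn_Icc
  have h_eval (L : ℝ) : ∫ t in Icc (-L) L, ∫ x in Icc (-L) L,
      ∑ i ∈ s, b i * exp (I * ↑((ω i).1 * x + (ω i).2 * t)) =
        ∑ i ∈ s, b i * G (ω i).1 L * G (ω i).2 L := by
    have h_inner (t : ℝ) : ∫ x in Icc (-L) L,
        ∑ i ∈ s, b i * exp (I * ↑((ω i).1 * x + (ω i).2 * t)) =
          ∑ i ∈ s, b i * G (ω i).1 L * exp (I * ↑((ω i).2 * t)) := by
      rw [integral_finsetSum]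
      · simp only [integral_const_mul, integral_Icc_exp_add_mul, G, mul_assoc]
      · intro i _
        simp only [ofReal_add, mul_add, exp_add]
        exact ((h_int _ L).mul_const _).const_mul _
    simp only [h_inner]
    rw [integral_finsetSum _ fun i _ => (h_int _ L).const_mul _]
    simp only [integral_const_mul, G]
  have h_lim : Tendsto
      (fun L : ℝ => ∑ i ∈ s, b i * (G (ω i).1 L / (2 * L)) * (G (ω i).2 L / (2 * L))) atTop
      (𝓝 (∑ i ∈ s, b i * (if (ω i).1 = 0 then 1 else 0) * (if (ω i).2 = 0 then 1 else 0))) :=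
    tendsto_finsetSum _ fun i _ =>
      (tendsto_const_nhds.mul (tendsto_mean_integral_Icc_exp _)).mul
        (tendsto_mean_integral_Icc_exp _)
  convert h_lim using 2 with L
  · rw [h_eval, mul_sum]
    refine sum_congr rfl fun i _ => ?_
    ring
  · rw [sum_filter]
    refine sum_congr rfl fun i _ => ?_
    split_ifs <;> simp_all [Prod.ext_iff]

theorem norm_sum_exp_sq_eq (s : Finset ι) (b : ι → ℂ) (ω : ι → ℝ × ℝ) (x t : ℝ) :
    (‖∑ i ∈ s, b i * exp (I * ↑((ω i).1 * x + (ω i).2 * t))‖ ^ 2 : ℝ) =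
      ∑ ij ∈ s ×ˢ s, b ij.1 * conj (b ij.2) *
        exp (I * ↑((ω ij.1 - ω ij.2).1 * x + (ω ij.1 - ω ij.2).2 * t)) := by
  rw [ofReal_pow, ← mul_conj', map_sum, sum_mul_sum, sum_product]
  refine sum_congr rfl fun i _ => sum_congr rfl fun j _ => ?_
  rw [map_mul, ← exp_conj, map_mul, conj_I, conj_ofReal, mul_mul_mul_comm, ← exp_add]
  congr 2
  push_cast [Prod.fst_sub, Prod.snd_sub]
  ring

theorem tendsto_mean_norm_sum_exp_sq (s : Finset ι) (b : ι → ℂ) (ω : ι → ℝ × ℝ) :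
    Tendsto (fun L : ℝ => 1 / (2 * L) ^ 2 * ∫ t in Icc (-L) L, ∫ x in Icc (-L) L,
        ‖∑ i ∈ s, b i * exp (I * ↑((ω i).1 * x + (ω i).2 * t))‖ ^ 2) atTop
      (𝓝 (∑ ij ∈ s ×ˢ s with ω ij.1 = ω ij.2, b ij.1 * conj (b ij.2)).re) := by
  have h := tendsto_mean_integral_sum_exp (s ×ˢ s) (fun ij => b ij.1 * conj (b ij.2))
    (fun ij => ω ij.1 - ω ij.2)
  simp only [sub_eq_zero, ← norm_sum_exp_sq_eq] at h
  refine ((continuous_re.tendsto _).comp h).congr fun L => ?_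
  simp only [Function.comp_apply]
  norm_cast

theorem sum_sum_fiber_le_mul_sum {α : Type*} [DecidableEq α] (s : Finset ι) (ω : ι → α) {k : ℕ}
    (hk : ∀ i ∈ s, #{j ∈ s | ω j = ω i} ≤ k) {f : ι → ℝ} (hf : ∀ i ∈ s, 0 ≤ f i) :
    ∑ i ∈ s, ∑ j ∈ s, (if ω j = ω i then f i else 0) ≤ k * ∑ i ∈ s, f i := by
  simp only [← sum_filter, sum_const, nsmul_eq_mul, mul_sum]
  exact sum_le_sum fun i hi => mul_le_mul_of_nonneg_right (by exact_mod_cast hk i hi) (hf i hi)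

theorem re_sum_mul_conj_le_of_card_fiber_le {α : Type*} [DecidableEq α] (s : Finset ι)
    (b : ι → ℂ) (ω : ι → α) {k : ℕ} (hk : ∀ i ∈ s, #{j ∈ s | ω j = ω i} ≤ k) :
    (∑ ij ∈ s ×ˢ s with ω ij.1 = ω ij.2, b ij.1 * conj (b ij.2)).re ≤
      k * ∑ i ∈ s, ‖b i‖ ^ 2 := by
  set S := {ij ∈ s ×ˢ s | ω ij.1 = ω ij.2}
  have h_left : ∑ ij ∈ S, ‖b ij.1‖ ^ 2 ≤ k * ∑ i ∈ s, ‖b i‖ ^ 2 := by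
    rw [sum_filter, sum_product]
    convert sum_sum_fiber_le_mul_sum s ω hk (f := fun i => ‖b i‖ ^ 2) (fun _ _ => by positivity)
      using 4 with i _ j _
    exact eq_comm
  have h_right : ∑ ij ∈ S, ‖b ij.2‖ ^ 2 ≤ k * ∑ i ∈ s, ‖b i‖ ^ 2 := by
    rw [sum_filter, sum_product_right]
    exact sum_sum_fiber_le_mul_sum s ω hk (f := fun i => ‖b i‖ ^ 2) fun _ _ => by positivity
  calc (∑ ij ∈ S, b ij.1 * conj (b ij.2)).re
      ≤ ∑ ij ∈ S, ‖b ij.1‖ * ‖b ij.2‖ := by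
        rw [re_sum]
        refine sum_le_sum fun ij _ => (re_le_norm _).trans_eq ?_
        rw [norm_mul, RCLike.norm_conj]
    _ ≤ ∑ ij ∈ S, (‖b ij.1‖ ^ 2 + ‖b ij.2‖ ^ 2) / 2 :=
        sum_le_sum fun ij _ => by nlinarith [sq_nonneg (‖b ij.1‖ - ‖b ij.2‖)]
    _ = (∑ ij ∈ S, ‖b ij.1‖ ^ 2 + ∑ ij ∈ S, ‖b ij.2‖ ^ 2) / 2 := by
        rw [← sum_div, sum_add_distrib]
    _ ≤ k * ∑ i ∈ s, ‖b i‖ ^ 2 := by linarith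

theorem eq_or_eq_swap_of_add_eq_of_sq_add_sq_eq {R : Type*} [CommRing R] [NoZeroDivisors R]
    [NeZero (2 : R)] {p q : R × R} (h₁ : q.1 + q.2 = p.1 + p.2)
    (h₂ : q.1 ^ 2 + q.2 ^ 2 = p.1 ^ 2 + p.2 ^ 2) : q = p ∨ q = p.swap := by
  obtain ⟨l, m⟩ := p
  obtain ⟨n, r⟩ := q
  have h : 2 * ((n - l) * (n - m)) = 0 := by linear_combination (n - l - m - r) * h₁ + h₂
  rcases mul_eq_zero.1 ((mul_eq_zero.1 h).resolve_left two_ne_zero) with h | h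
  · exact .inl (Prod.ext (by linear_combination h) (by linear_combination h₁ - h))
  · refine .inr ?_
    rw [Prod.swap_prod_mk, Prod.mk.injEq]
    exact ⟨by linear_combination h, by linear_combination h₁ - h⟩

def pairFrequency (p : ℝ × ℝ) : ℝ × ℝ := (p.1 + p.2, -(p.1 ^ 2 + p.2 ^ 2))

theorem card_filter_pairFrequency_eq_le_two (s : Finset (ℝ × ℝ)) (p : ℝ × ℝ) :
    #{q ∈ s | pairFrequency q = pairFrequency p} ≤ 2 := by
  refine (card_le_card (t := {p, p.swap}) fun q hq => ?_).trans card_le_two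
  have hq := (mem_filter.1 hq).2
  simp only [pairFrequency, Prod.ext_iff, neg_inj] at hq
  simpa using eq_or_eq_swap_of_add_eq_of_sq_add_sq_eq hq.1 hq.2

theorem norm_sum_schrodinger_pow_four (Λ₀ : Finset ℝ) (a : ℝ → ℂ) (x t : ℝ) :
    ‖∑ lam ∈ Λ₀, a lam * exp (I * ↑(lam * x - lam ^ 2 * t))‖ ^ 4 =
      ‖∑ p ∈ Λ₀ ×ˢ Λ₀, a p.1 * a p.2 *
        exp (I * ↑((pairFrequency p).1 * x + (pairFrequency p).2 * t))‖ ^ 2 := by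
  rw [show 4 = 2 * 2 by rfl, pow_mul, ← norm_pow, sq (∑ lam ∈ Λ₀, _ : ℂ), sum_mul_sum,
    sum_product]
  congr 3 with l
  refine sum_congr rfl fun m _ => ?_
  rw [mul_mul_mul_comm, ← exp_add, pairFrequency]
  push_cast
  ring_nf

theorem sum_norm_mul_sq_eq_sq_sum (s : Finset ι) (a : ι → ℂ) :
    ∑ p ∈ s ×ˢ s, ‖a p.1 * a p.2‖ ^ 2 = (∑ i ∈ s, ‖a i‖ ^ 2) ^ 2 := by
  simp only [norm_mul, mul_pow]
  rw [sq (∑ i ∈ s, _), sum_mul_sum, sum_product]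

/-- Time-averaged `L⁴` Strichartz estimate for the Schrödinger evolution of
Besicovitch almost-periodic data (Theorem 1.2, estimate (1.9)). -/
theorem averaged_L4_strichartz_schrodinger :
    ∃ K : ℝ, 0 < K ∧ ∀ (Λ₀ : Finset ℝ) (a : ℝ → ℂ),
      limsup (fun L : ℝ =>
          (1 / (2 * L) ^ 2) * ∫ t in Set.Icc (-L) L, ∫ x in Set.Icc (-L) L,
            ‖∑ lam ∈ Λ₀, a lam *
              Complex.exp (Complex.I * ((lam * x - lam ^ 2 * t : ℝ) : ℂ))‖ ^ 4) atTop
        ≤ K ^ 4 * (∑ lam ∈ Λ₀, ‖a lam‖ ^ 2) ^ 2 := by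
  refine ⟨2, two_pos, fun Λ₀ a => ?_⟩
  simp only [norm_sum_schrodinger_pow_four]
  rw [(tendsto_mean_norm_sum_exp_sq _ _ pairFrequency).limsup_eq]
  calc _ ≤ ((2 : ℕ) : ℝ) * ∑ p ∈ Λ₀ ×ˢ Λ₀, ‖a p.1 * a p.2‖ ^ 2 :=
        re_sum_mul_conj_le_of_card_fiber_le _ _ _ fun p _ =>
          card_filter_pairFrequency_eq_le_two _ p
    _ ≤ 2 ^ 4 * (∑ lam ∈ Λ₀, ‖a lam‖ ^ 2) ^ 2 := by
        rw [sum_norm_mul_sq_eq_sq_sum]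
        gcongr
        norm_num
end

section
/- There exists a universal constant K > 0 such that for every finite set Λ₀ ⊂ ℝ and every a : Λ₀ → ℂ one has limsup_{L→∞} (1/(2L)²) ∫_{−L}^{L} ∫_{−L}^{L} | ∑_{λ ∈ Λ₀} a_λ e^{i(λ x + λ³ t)} |^4 dx dt ≤ K^4 · ( ∑_{λ ∈ Λ₀} |a_λ|^2 )^2. (Time-averaged L^4 Strichartz estimate for the Airy evolution of Besicovitch almost-periodic data, Theorem 1.2, estimate (1.10).) -/
/-!
Expanding `|F|⁴ = (F F̄)²` writes `|F|⁴` as a trigonometric polynomial in `(x, t)` with frequencies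
`(λ₁ - μ₁ + λ₂ - μ₂, λ₁³ - μ₁³ + λ₂³ - μ₂³)`. The average of a plane wave over `[-L, L]²` tends to
`1` at frequency zero and to `0` otherwise, so the averages of `|F|⁴` converge to the sum of the
coefficients over resonant quadruples. Resonance forces `(μ₁, μ₂) = (λ₁, λ₂)`, `(μ₁, μ₂) = (λ₂, λ₁)`
or `(λ₂, μ₂) = (-λ₁, -μ₁)`, and each of these three families contributes at most
`(∑ |a_λ|²)²` (the last one by Cauchy–Schwarz), so `K = 2` works.
-/

open MeasureTheory Filter

open Topology ComplexConjugate

section Averages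

variable {E : Type*} [NormedAddCommGroup E] [NormedSpace ℝ E]

noncomputable def lineAverage (g : ℝ → E) (L : ℝ) : E := (1 / (2 * L)) • ∫ x in Set.Icc (-L) L, g x

noncomputable def boxAverage (g : ℝ → ℝ → E) (L : ℝ) : E :=
  (1 / (2 * L) ^ 2) • ∫ t in Set.Icc (-L) L, ∫ x in Set.Icc (-L) L, g x t

lemma lineAverage_const [CompleteSpace E] (c : E) {L : ℝ} (hL : 0 < L) :
    lineAverage (fun _ => c) L = c := by
  rw [lineAverage, setIntegral_const, Real.volume_real_Icc_of_le (by linarith), smul_smul,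
    show 1 / (2 * L) * (L - -L) = 1 by field_simp; ring, one_smul]

lemma boxAverage_eq_lineAverage_lineAverage (g : ℝ → ℝ → E) (L : ℝ) :
    boxAverage g L = lineAverage (fun t => lineAverage (fun x => g x t) L) L := by
  simp only [boxAverage, lineAverage, integral_smul, smul_smul]
  ring_nf

lemma boxAverage_ofReal (f : ℝ → ℝ → ℝ) (L : ℝ) :
    boxAverage (fun x t => (f x t : ℂ)) L = ((boxAverage f L : ℝ) : ℂ) := by
  simp only [boxAverage, integral_complex_ofReal, Complex.real_smul, Complex.ofReal_mul,
    smul_eq_mul]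

end Averages

noncomputable def wave (θ x : ℝ) : ℂ := Complex.exp (Complex.I * ((θ * x : ℝ) : ℂ))

lemma continuous_wave (θ : ℝ) : Continuous (wave θ) := by
  unfold wave; fun_prop

lemma norm_wave (θ x : ℝ) : ‖wave θ x‖ = 1 := by
  rw [wave, mul_comm, Complex.norm_exp_ofReal_mul_I]

lemma norm_integral_wave_le {θ : ℝ} (hθ : θ ≠ 0) {L : ℝ} (hL : 0 ≤ L) :
    ‖∫ x in Set.Icc (-L) L, wave θ x‖ ≤ 2 / |θ| := by
  have hθI : Complex.I * θ ≠ 0 := mul_ne_zero Complex.I_ne_zero (Complex.ofReal_ne_zero.2 hθ)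
  have hint : ∫ x in Set.Icc (-L) L, wave θ x = (wave θ L - wave θ (-L)) / (Complex.I * θ) := by
    rw [integral_Icc_eq_integral_Ioc, ← intervalIntegral.integral_of_le (by linarith)]
    simpa [wave, mul_assoc] using integral_exp_mul_complex (a := -L) (b := L) hθI
  calc ‖∫ x in Set.Icc (-L) L, wave θ x‖
      ≤ (‖wave θ L‖ + ‖wave θ (-L)‖) / ‖Complex.I * θ‖ := by
        rw [hint, norm_div]; gcongr; exact norm_sub_le _ _
    _ = 2 / |θ| := by simp [norm_wave]; norm_num

lemma tendsto_lineAverage_wave (θ : ℝ) :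
    Tendsto (lineAverage (wave θ)) atTop (𝓝 (if θ = 0 then 1 else 0)) := by
  split_ifs with hθ
  · refine tendsto_const_nhds.congr' ?_
    filter_upwards [eventually_gt_atTop 0] with L hL
    have hwave : wave θ = fun _ => 1 := by funext x; simp [wave, hθ]
    rw [hwave, lineAverage_const _ hL]
  · rw [tendsto_zero_iff_norm_tendsto_zero]
    have hdecay : Tendsto (fun L : ℝ => 1 / |θ| * L⁻¹) atTop (𝓝 0) := by
      simpa using tendsto_inv_atTop_zero.const_mul (1 / |θ|)
    refine squeeze_zero' (Eventually.of_forall fun L => norm_nonneg _) ?_ hdecay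
    filter_upwards [eventually_gt_atTop 0] with L hL
    calc ‖lineAverage (wave θ) L‖ = 1 / (2 * L) * ‖∫ x in Set.Icc (-L) L, wave θ x‖ := by
          rw [lineAverage, norm_smul, Real.norm_of_nonneg (by positivity)]
      _ ≤ 1 / (2 * L) * (2 / |θ|) := by gcongr; exact norm_integral_wave_le hθ hL.le
      _ = 1 / |θ| * L⁻¹ := by field_simp

lemma lineAverage_sum_wave {ι : Type*} (s : Finset ι) (c : ι → ℂ) (θ : ι → ℝ) (L : ℝ) :
    lineAverage (fun x => ∑ i ∈ s, c i * wave (θ i) x) L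
      = ∑ i ∈ s, c i * lineAverage (wave (θ i)) L := by
  have hint : ∀ i ∈ s, IntegrableOn (fun x => c i * wave (θ i) x) (Set.Icc (-L) L) :=
    fun i _ => ((continuous_wave _).const_smul (c i)).integrableOn_Icc
  simp only [lineAverage, integral_finsetSum s hint, integral_const_mul, Finset.smul_sum,
    mul_smul_comm]

noncomputable def planeWave (ξ : ℝ × ℝ) (x t : ℝ) : ℂ :=
  Complex.exp (Complex.I * ((ξ.1 * x + ξ.2 * t : ℝ) : ℂ))

lemma planeWave_eq_wave_mul_wave (ξ : ℝ × ℝ) (x t : ℝ) :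
    planeWave ξ x t = wave ξ.1 x * wave ξ.2 t := by
  rw [planeWave, wave, wave, ← Complex.exp_add]; push_cast; ring_nf

lemma planeWave_mul_planeWave (ξ η : ℝ × ℝ) (x t : ℝ) :
    planeWave ξ x t * planeWave η x t = planeWave (ξ + η) x t := by
  rw [planeWave, planeWave, planeWave, ← Complex.exp_add, Prod.fst_add, Prod.snd_add]
  push_cast; ring_nf

lemma conj_planeWave (ξ : ℝ × ℝ) (x t : ℝ) : conj (planeWave ξ x t) = planeWave (-ξ) x t := by
  rw [planeWave, planeWave, ← Complex.exp_conj, map_mul, Complex.conj_I, Complex.conj_ofReal,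
    Prod.fst_neg, Prod.snd_neg]
  push_cast; ring_nf

section TrigSum

variable {ι κ : Type*}

noncomputable def trigSum (s : Finset ι) (c : ι → ℂ) (ξ : ι → ℝ × ℝ) (x t : ℝ) : ℂ :=
  ∑ i ∈ s, c i * planeWave (ξ i) x t

lemma trigSum_mul_trigSum (s : Finset ι) (s' : Finset κ) (c : ι → ℂ) (c' : κ → ℂ)
    (ξ : ι → ℝ × ℝ) (ξ' : κ → ℝ × ℝ) (x t : ℝ) :
    trigSum s c ξ x t * trigSum s' c' ξ' x t
      = trigSum (s ×ˢ s') (fun p => c p.1 * c' p.2) (fun p => ξ p.1 + ξ' p.2) x t := by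
  simp only [trigSum, Finset.sum_mul_sum, Finset.sum_product, ← planeWave_mul_planeWave]
  congr! 2 with i _ j _
  ring

lemma conj_trigSum (s : Finset ι) (c : ι → ℂ) (ξ : ι → ℝ × ℝ) (x t : ℝ) :
    conj (trigSum s c ξ x t) = trigSum s (fun i => conj (c i)) (fun i => -ξ i) x t := by
  simp only [trigSum, map_sum, map_mul, conj_planeWave]

lemma norm_trigSum_pow_four (s : Finset ι) (c : ι → ℂ) (ξ : ι → ℝ × ℝ) (x t : ℝ) :
    ((‖trigSum s c ξ x t‖ ^ 4 : ℝ) : ℂ)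
      = trigSum ((s ×ˢ s) ×ˢ (s ×ˢ s))
          (fun q => c q.1.1 * conj (c q.1.2) * (c q.2.1 * conj (c q.2.2)))
          (fun q => ξ q.1.1 - ξ q.1.2 + (ξ q.2.1 - ξ q.2.2)) x t := by
  have hsq : ((‖trigSum s c ξ x t‖ ^ 4 : ℝ) : ℂ)
      = trigSum s c ξ x t * conj (trigSum s c ξ x t)
        * (trigSum s c ξ x t * conj (trigSum s c ξ x t)) := by
    rw [Complex.mul_conj, Complex.normSq_eq_norm_sq]; push_cast; ring
  simp only [hsq, conj_trigSum, trigSum_mul_trigSum, sub_eq_add_neg]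

lemma boxAverage_trigSum (s : Finset ι) (c : ι → ℂ) (ξ : ι → ℝ × ℝ) (L : ℝ) :
    boxAverage (trigSum s c ξ) L
      = ∑ i ∈ s, c i * lineAverage (wave (ξ i).1) L * lineAverage (wave (ξ i).2) L := by
  have hinner : ∀ t, lineAverage (fun x => trigSum s c ξ x t) L
      = ∑ i ∈ s, c i * lineAverage (wave (ξ i).1) L * wave (ξ i).2 t := by
    intro t
    have hsplit : (fun x => trigSum s c ξ x t)
        = fun x => ∑ i ∈ s, c i * wave (ξ i).2 t * wave (ξ i).1 x := by
      funext x
      refine Finset.sum_congr rfl fun i _ => ?_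
      rw [planeWave_eq_wave_mul_wave]; ring
    rw [hsplit, lineAverage_sum_wave]
    exact Finset.sum_congr rfl fun i _ => by ring
  simp only [boxAverage_eq_lineAverage_lineAverage, hinner, lineAverage_sum_wave]

lemma tendsto_boxAverage_trigSum (s : Finset ι) (c : ι → ℂ) (ξ : ι → ℝ × ℝ) :
    Tendsto (boxAverage (trigSum s c ξ)) atTop (𝓝 (∑ i ∈ s with ξ i = 0, c i)) := by
  rw [funext (boxAverage_trigSum s c ξ), Finset.sum_filter]
  convert tendsto_finsetSum s fun i _ => ((tendsto_lineAverage_wave (ξ i).1).const_mul (c i)).mul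
    (tendsto_lineAverage_wave (ξ i).2) using 2
  refine Finset.sum_congr rfl fun i _ => ?_
  rw [mul_assoc, ite_zero_mul_ite_zero, one_mul, mul_ite, mul_one, mul_zero]
  simp only [Prod.ext_iff, Prod.fst_zero, Prod.snd_zero]

lemma tendsto_boxAverage_norm_trigSum_pow_four (s : Finset ι) (c : ι → ℂ)
    (ξ : ι → ℝ × ℝ) :
    Tendsto (boxAverage fun x t => ‖trigSum s c ξ x t‖ ^ 4) atTop
      (𝓝 (∑ q ∈ (s ×ˢ s) ×ˢ (s ×ˢ s) with ξ q.1.1 - ξ q.1.2 + (ξ q.2.1 - ξ q.2.2) = 0,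
        c q.1.1 * conj (c q.1.2) * (c q.2.1 * conj (c q.2.2))).re) := by
  refine ((Complex.continuous_re.tendsto _).comp (tendsto_boxAverage_trigSum _ _ _)).congr
    fun L => ?_
  have hexpand : trigSum ((s ×ˢ s) ×ˢ (s ×ˢ s))
      (fun q => c q.1.1 * conj (c q.1.2) * (c q.2.1 * conj (c q.2.2)))
      (fun q => ξ q.1.1 - ξ q.1.2 + (ξ q.2.1 - ξ q.2.2))
      = fun x t => ((‖trigSum s c ξ x t‖ ^ 4 : ℝ) : ℂ) := by
    funext x t; rw [norm_trigSum_pow_four]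
  rw [Function.comp_apply, hexpand, boxAverage_ofReal, Complex.ofReal_re]

end TrigSum

lemma airy_resonance {l₁ m₁ l₂ m₂ : ℝ}
    (h : (l₁, l₁ ^ 3) - (m₁, m₁ ^ 3) + ((l₂, l₂ ^ 3) - (m₂, m₂ ^ 3)) = (0 : ℝ × ℝ)) :
    (m₁ = l₁ ∧ m₂ = l₂) ∨ (m₁ = l₂ ∧ m₂ = l₁) ∨ (l₂ = -l₁ ∧ m₂ = -m₁) := by
  simp only [Prod.ext_iff, Prod.fst_add, Prod.snd_add, Prod.fst_sub, Prod.snd_sub,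
    Prod.fst_zero, Prod.snd_zero] at h
  obtain ⟨h₁, h₃⟩ := h
  obtain rfl : m₂ = l₁ + l₂ - m₁ := by linarith
  -- with `m₂` eliminated, the cubic relation is `3 (m₁ - l₁) (m₁ - l₂) (l₁ + l₂) = 0`
  have hfactor : (m₁ - l₁) * (m₁ - l₂) * (l₁ + l₂) = 0 := by linear_combination (-1 / 3) * h₃
  rcases mul_eq_zero.1 hfactor with h | h
  · rcases mul_eq_zero.1 h with h | h
    · left; constructor <;> linarith
    · right; left; constructor <;> linarith
  · right; right; constructor <;> linarith

lemma sum_union_le_add {α : Type*} [DecidableEq α] {s t : Finset α} {f : α → ℝ}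
    (hf : ∀ a, 0 ≤ f a) : ∑ a ∈ s ∪ t, f a ≤ ∑ a ∈ s, f a + ∑ a ∈ t, f a := by
  rw [← Finset.sum_union_inter]
  exact le_add_of_nonneg_right (Finset.sum_nonneg fun a _ => hf a)

lemma sq_sum_mul_neg_le (s : Finset ℝ) (w : ℝ → ℝ) :
    (∑ l ∈ s with -l ∈ s, w l * w (-l)) ^ 2 ≤ (∑ l ∈ s, w l ^ 2) ^ 2 := by
  have hneg : ∑ l ∈ s with -l ∈ s, w (-l) ^ 2 ≤ ∑ l ∈ s, w l ^ 2 := by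
    rw [← Finset.sum_image (g := Neg.neg) (f := fun l => w l ^ 2) fun _ _ _ _ => neg_inj.1]
    refine Finset.sum_le_sum_of_subset_of_nonneg ?_ fun l _ _ => sq_nonneg _
    intro l hl
    obtain ⟨m, hm, rfl⟩ := Finset.mem_image.1 hl
    exact (Finset.mem_filter.1 hm).2
  calc (∑ l ∈ s with -l ∈ s, w l * w (-l)) ^ 2
      ≤ (∑ l ∈ s with -l ∈ s, w l ^ 2) * ∑ l ∈ s with -l ∈ s, w (-l) ^ 2 :=
        Finset.sum_mul_sq_le_sq_mul_sq _ _ _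
    _ ≤ (∑ l ∈ s, w l ^ 2) * ∑ l ∈ s, w l ^ 2 :=
        mul_le_mul (Finset.sum_le_sum_of_subset_of_nonneg (Finset.filter_subset _ _)
          fun l _ _ => sq_nonneg _) hneg
          (Finset.sum_nonneg fun l _ => sq_nonneg _) (Finset.sum_nonneg fun l _ => sq_nonneg _)
    _ = (∑ l ∈ s, w l ^ 2) ^ 2 := (sq _).symm

lemma sum_airy_resonant_le (s : Finset ℝ) (w : ℝ → ℝ) (hw : ∀ l, 0 ≤ w l) :
    ∑ q ∈ (s ×ˢ s) ×ˢ (s ×ˢ s) with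
        (q.1.1, q.1.1 ^ 3) - (q.1.2, q.1.2 ^ 3) + ((q.2.1, q.2.1 ^ 3) - (q.2.2, q.2.2 ^ 3)) = 0,
      w q.1.1 * w q.1.2 * (w q.2.1 * w q.2.2)
    ≤ 3 * (∑ l ∈ s, w l ^ 2) ^ 2 := by
  set g : (ℝ × ℝ) × (ℝ × ℝ) → ℝ := fun q => w q.1.1 * w q.1.2 * (w q.2.1 * w q.2.2)
  have hg : ∀ q, 0 ≤ g q := fun q =>
    mul_nonneg (mul_nonneg (hw _) (hw _)) (mul_nonneg (hw _) (hw _))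
  set s₀ := s.filter fun l => -l ∈ s
  let diag : ℝ × ℝ → (ℝ × ℝ) × (ℝ × ℝ) := fun p => ((p.1, p.1), (p.2, p.2))
  let swap : ℝ × ℝ → (ℝ × ℝ) × (ℝ × ℝ) := fun p => ((p.1, p.2), (p.2, p.1))
  let antipodal : ℝ × ℝ → (ℝ × ℝ) × (ℝ × ℝ) := fun p => ((p.1, p.2), (-p.1, -p.2))
  have hcover : ((s ×ˢ s) ×ˢ (s ×ˢ s)).filter (fun q =>
        (q.1.1, q.1.1 ^ 3) - (q.1.2, q.1.2 ^ 3) + ((q.2.1, q.2.1 ^ 3) - (q.2.2, q.2.2 ^ 3)) = 0)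
      ⊆ (s ×ˢ s).image diag ∪ (s ×ˢ s).image swap ∪ (s₀ ×ˢ s₀).image antipodal := by
    rintro ⟨⟨l₁, m₁⟩, ⟨l₂, m₂⟩⟩ hq
    simp only [Finset.mem_filter, Finset.mem_product] at hq
    obtain ⟨⟨⟨hl₁, hm₁⟩, hl₂, hm₂⟩, hres⟩ := hq
    simp only [Finset.mem_union, Finset.mem_image, Finset.mem_product, Prod.exists, Prod.mk.injEq,
      diag, swap, antipodal, s₀, Finset.mem_filter]
    rcases airy_resonance hres with ⟨rfl, rfl⟩ | ⟨rfl, rfl⟩ | ⟨rfl, rfl⟩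
    · exact Or.inl (Or.inl ⟨m₁, m₂, ⟨hm₁, hm₂⟩, by simp⟩)
    · exact Or.inl (Or.inr ⟨m₂, m₁, ⟨hm₂, hm₁⟩, by simp⟩)
    · exact Or.inr ⟨l₁, m₁, ⟨⟨hl₁, hl₂⟩, hm₁, hm₂⟩, by simp⟩
  have hdiag : ∑ p ∈ s ×ˢ s, g (diag p) = (∑ l ∈ s, w l ^ 2) ^ 2 := by
    rw [sq, Finset.sum_mul_sum, Finset.sum_product]
    exact Finset.sum_congr rfl fun l _ => Finset.sum_congr rfl fun m _ => by
      simp only [g, diag]; ring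
  have hswap : ∑ p ∈ s ×ˢ s, g (swap p) = (∑ l ∈ s, w l ^ 2) ^ 2 := by
    rw [sq, Finset.sum_mul_sum, Finset.sum_product]
    exact Finset.sum_congr rfl fun l _ => Finset.sum_congr rfl fun m _ => by
      simp only [g, swap]; ring
  have hantipodal : ∑ p ∈ s₀ ×ˢ s₀, g (antipodal p) = (∑ l ∈ s₀, w l * w (-l)) ^ 2 := by
    rw [sq, Finset.sum_mul_sum, Finset.sum_product]
    exact Finset.sum_congr rfl fun l _ => Finset.sum_congr rfl fun m _ => by
      simp only [g, antipodal]; ring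
  refine (Finset.sum_le_sum_of_subset_of_nonneg hcover fun q _ _ => hg q).trans ?_
  calc _ ≤ ∑ q ∈ (s ×ˢ s).image diag, g q + ∑ q ∈ (s ×ˢ s).image swap, g q
          + ∑ q ∈ (s₀ ×ˢ s₀).image antipodal, g q :=
        (sum_union_le_add hg).trans (add_le_add_left (sum_union_le_add hg) _)
    _ ≤ ∑ p ∈ s ×ˢ s, g (diag p) + ∑ p ∈ s ×ˢ s, g (swap p) + ∑ p ∈ s₀ ×ˢ s₀, g (antipodal p) := by
        gcongr <;> exact Finset.sum_image_le_of_nonneg fun q _ => hg q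
    _ ≤ 3 * (∑ l ∈ s, w l ^ 2) ^ 2 := by
        rw [hdiag, hswap, hantipodal]; linarith [sq_sum_mul_neg_le s w]

/-- Time-averaged `L⁴` Strichartz estimate for the Airy evolution of
Besicovitch almost-periodic data (Theorem 1.2, estimate (1.10)). -/
theorem averaged_L4_strichartz_airy :
    ∃ K : ℝ, 0 < K ∧ ∀ (Λ₀ : Finset ℝ) (a : ℝ → ℂ),
      limsup (fun L : ℝ =>
          (1 / (2 * L) ^ 2) * ∫ t in Set.Icc (-L) L, ∫ x in Set.Icc (-L) L,
            ‖∑ lam ∈ Λ₀, a lam *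
              Complex.exp (Complex.I * ((lam * x + lam ^ 3 * t : ℝ) : ℂ))‖ ^ 4) atTop
        ≤ K ^ 4 * (∑ lam ∈ Λ₀, ‖a lam‖ ^ 2) ^ 2 := by
  refine ⟨2, two_pos, fun Λ₀ a => ?_⟩
  -- the average in the statement unfolds to `boxAverage` of `‖trigSum Λ₀ a (fun λ ↦ (λ, λ³))‖ ^ 4`
  refine ((tendsto_boxAverage_norm_trigSum_pow_four Λ₀ a fun l => (l, l ^ 3)).limsup_eq).trans_le ?_
  refine (Complex.re_le_norm _).trans <| (norm_sum_le _ _).trans ?_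
  calc _ = ∑ q ∈ (Λ₀ ×ˢ Λ₀) ×ˢ (Λ₀ ×ˢ Λ₀) with
          (q.1.1, q.1.1 ^ 3) - (q.1.2, q.1.2 ^ 3) + ((q.2.1, q.2.1 ^ 3) - (q.2.2, q.2.2 ^ 3)) = 0,
        ‖a q.1.1‖ * ‖a q.1.2‖ * (‖a q.2.1‖ * ‖a q.2.2‖) := by
          simp only [norm_mul, Complex.norm_conj]
    _ ≤ 3 * (∑ l ∈ Λ₀, ‖a l‖ ^ 2) ^ 2 := sum_airy_resonant_le Λ₀ _ fun l => norm_nonneg _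
    _ ≤ 2 ^ 4 * (∑ l ∈ Λ₀, ‖a l‖ ^ 2) ^ 2 := by gcongr; norm_num
end

section
/- There exists an absolute constant C > 0 such that for every δ ∈ (0,1] and all ξ₁, ξ₂, ξ₃, ξ₄ ∈ [0,1] satisfying ξ₁ + ξ₂ = ξ₃ + ξ₄ and |ξ₁³ + ξ₂³ − ξ₃³ − ξ₄³| ≤ δ, one has min( |ξ₁ − ξ₃| , |ξ₁ − ξ₄| ) ≤ C δ^{1/3}. (Biorthogonality for the cubic curve, underpinning the Córdoba–Fefferman square function estimate of Theorem 2.2.) -/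
/-- Biorthogonality for the cubic curve (underpinning the Córdoba–Fefferman square
function estimate of Theorem 2.2): quadruples in `[0,1]` with equal sums and almost
equal sums of cubes pair off within `O(δ^{1/3})`. -/
theorem biorthogonality_cubic :
    ∃ C : ℝ, 0 < C ∧
      ∀ δ : ℝ, δ ∈ Set.Ioc (0 : ℝ) 1 →
      ∀ ξ₁ ξ₂ ξ₃ ξ₄ : ℝ,
        ξ₁ ∈ Set.Icc (0 : ℝ) 1 → ξ₂ ∈ Set.Icc (0 : ℝ) 1 →
        ξ₃ ∈ Set.Icc (0 : ℝ) 1 → ξ₄ ∈ Set.Icc (0 : ℝ) 1 →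
        ξ₁ + ξ₂ = ξ₃ + ξ₄ →
        |ξ₁ ^ 3 + ξ₂ ^ 3 - ξ₃ ^ 3 - ξ₄ ^ 3| ≤ δ →
        min |ξ₁ - ξ₃| |ξ₁ - ξ₄| ≤ C * δ ^ ((1 : ℝ) / 3) := by
  refine ⟨1, one_pos, ?_⟩
  intro δ hδ ξ₁ ξ₂ ξ₃ ξ₄ h1 h2 h3 h4 hsum hcube
  set t := δ ^ ((1 : ℝ) / 3) with ht_def
  have hδ0 : 0 < δ := hδ.1
  have ht0 : 0 < t := Real.rpow_pos_of_pos hδ0 _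
  have ht3 : t ^ 3 = δ := by
    rw [ht_def, ← Real.rpow_natCast (δ ^ ((1:ℝ)/3)) 3, ← Real.rpow_mul hδ0.le]
    norm_num
  rw [one_mul]
  by_cases hs : ξ₁ + ξ₂ ≤ t
  · -- all points are in [0, t]
    have hξ1 : ξ₁ ≤ t := by linarith [h2.1]
    have hξ3 : ξ₃ ≤ t := by linarith [h4.1, hsum]
    have : |ξ₁ - ξ₃| ≤ t := abs_le.2 ⟨by linarith [h1.1], by linarith [h3.1]⟩
    exact (min_le_left _ _).trans this
  · push_neg at hs
    have hD : (ξ₁ - ξ₃) * (ξ₁ - ξ₄) = ξ₃ * ξ₄ - ξ₁ * ξ₂ := by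
      linear_combination ξ₁ * hsum
    have hfac : ξ₁ ^ 3 + ξ₂ ^ 3 - ξ₃ ^ 3 - ξ₄ ^ 3
        = 3 * (ξ₁ + ξ₂) * (ξ₃ * ξ₄ - ξ₁ * ξ₂) := by
      linear_combination ((ξ₁ + ξ₂) ^ 2 + (ξ₁ + ξ₂) * (ξ₃ + ξ₄) + (ξ₃ + ξ₄) ^ 2
        - 3 * ξ₃ * ξ₄) * hsum
    have hspos : 0 < ξ₁ + ξ₂ := ht0.trans hs
    have habs : 3 * (ξ₁ + ξ₂) * |ξ₃ * ξ₄ - ξ₁ * ξ₂| ≤ δ := by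
      have := hcube
      rw [hfac, abs_mul, abs_of_pos (by linarith : (0:ℝ) < 3 * (ξ₁ + ξ₂))] at this
      linarith
    have hDle : |ξ₃ * ξ₄ - ξ₁ * ξ₂| ≤ t ^ 2 := by
      have h3t : 3 * t * |ξ₃ * ξ₄ - ξ₁ * ξ₂| ≤ δ := by
        nlinarith [abs_nonneg (ξ₃ * ξ₄ - ξ₁ * ξ₂)]
      nlinarith
    set m := min |ξ₁ - ξ₃| |ξ₁ - ξ₄| with hm
    have hm0 : 0 ≤ m := le_min (abs_nonneg _) (abs_nonneg _)
    have hm2 : m ^ 2 ≤ |ξ₃ * ξ₄ - ξ₁ * ξ₂| := by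
      have : m ^ 2 ≤ |ξ₁ - ξ₃| * |ξ₁ - ξ₄| := by
        nlinarith [min_le_left |ξ₁ - ξ₃| |ξ₁ - ξ₄|, min_le_right |ξ₁ - ξ₃| |ξ₁ - ξ₄|,
          abs_nonneg (ξ₁ - ξ₃), abs_nonneg (ξ₁ - ξ₄)]
      rw [← abs_mul, hD] at this
      exact this
    nlinarith
end

section
/- Let ν ≥ 2, let ω ∈ ℝ^ν be non-resonant with ω_i ∈ (1/2,1] for all i, let b = ν − 1, and let 0 ≤ s < b/2. For a finitely supported a : ℤ^ν → ℂ define for n ∈ ℤ^ν and t ∈ ℝ the first Picard iterate coefficient c_a(t, n) = ∑_{(n₁,n₂,n₃): n₁ − n₂ + n₃ = n} a_{n₁} \overline{a_{n₂}} a_{n₃} · ∫_0^t e^{i s (⟨n₁⟩_ω² − ⟨n₂⟩_ω² + ⟨n₃⟩_ω² − ⟨n⟩_ω²)} ds. Then there is NO constant K > 0 such that for every finitely supported a : ℤ^ν → ℂ, sup_{t ∈ [0,1]} ( ∑_{n ∈ ℤ^ν} (1+|n|)^{2s} |c_a(t,n)|² )^{1/2} ≤ K · ( ∑_{n ∈ ℤ^ν}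 (1+|n|)^{2s} |a_n|² )^{3/2}. (Failure of the first Picard iterate bound for the cubic NLS with quasi-periodic data in 𝓗^s_Λ for s < b/2; this shows C³-ill-posedness below s = b/2, Proposition 6.2 in dimension d = 1.) -/
open MeasureTheory Filter

/-- The frequency `⟨n⟩_ω = n · ω` of a lattice point `n ∈ ℤ^ν`. -/
noncomputable def freqQP {ν : ℕ} (ω : Fin ν → ℝ) (n : Fin ν → ℤ) : ℝ :=
  ∑ i, (n i : ℝ) * ω i

/-- The height `|n|` (Euclidean norm) of a lattice point `n ∈ ℤ^ν`. -/
noncomputable def heightQP {ν : ℕ} (n : Fin ν → ℤ) : ℝ :=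
  Real.sqrt (∑ i, ((n i : ℝ)) ^ 2)

/-- The `n`-th Fourier coefficient `c_a(t,n)` of the first Picard iterate of the
cubic NLS with quasi-periodic initial datum `∑ₙ aₙ e^{i⟨n⟩_ω x}`, with the free
phase removed. -/
noncomputable def picardCoeff {ν : ℕ} (ω : Fin ν → ℝ) (a : (Fin ν → ℤ) → ℂ)
    (t : ℝ) (n : Fin ν → ℤ) : ℂ :=
  ∑' m : (Fin ν → ℤ) × (Fin ν → ℤ) × (Fin ν → ℤ),
    if m.1 - m.2.1 + m.2.2 = n then
      a m.1 * (starRingEnd ℂ) (a m.2.1) * a m.2.2 *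
        ∫ s in (0 : ℝ)..t,
          Complex.exp (Complex.I *
            ((s * (freqQP ω m.1 ^ 2 - freqQP ω m.2.1 ^ 2 + freqQP ω m.2.2 ^ 2
                - freqQP ω n ^ 2) : ℝ) : ℂ))
    else 0

/-!
Take for `a` the indicator of a set `S` of `L ^ b` lattice points (`b = ν - 1`) whose frequencies
all lie within `1/2` of a common value `T ω₀ ≍ L`: the tail coordinates range freely over `[0, L)`
and the first coordinate is then fixed by rounding. For `n = n₁ - n₂ + n₃` the phase
`⟨n₁⟩² - ⟨n₂⟩² + ⟨n₃⟩² - ⟨n⟩² = 2 (⟨n₁⟩ - ⟨n₂⟩) (⟨n₂⟩ - ⟨n₃⟩)` is at most `2` in size, so up to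
time `1/3` the oscillatory integrals do not cancel and `Re c_a(1/3, n) ≥ r(n) / 6`, where `r(n)`
counts the representations `n = n₁ - n₂ + n₃` in `S`. The `L ^ (3b)` triples land on `O(L ^ b)`
points, so by Cauchy–Schwarz `∑ r(n)² ≳ L ^ (5b)`; all heights involved are `≍ L`. Hence the
squared iterate norm is `≳ L ^ (5b + 2s)` while the sixth power of the data norm is
`≲ L ^ (3b + 6s)`, which is impossible for large `L` once `2s < b`.
-/

section Lattice

variable {N : ℕ}

lemma freqQP_add (ω : Fin N → ℝ) (x y : Fin N → ℤ) :
    freqQP ω (x + y) = freqQP ω x + freqQP ω y := by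
  simp only [freqQP, Pi.add_apply, Int.cast_add, add_mul, Finset.sum_add_distrib]

lemma freqQP_sub (ω : Fin N → ℝ) (x y : Fin N → ℤ) :
    freqQP ω (x - y) = freqQP ω x - freqQP ω y := by
  simp only [freqQP, Pi.sub_apply, Int.cast_sub, sub_mul, Finset.sum_sub_distrib]

lemma freqQP_update (ω : Fin N → ℝ) (n : Fin N → ℤ) (i : Fin N) (k : ℤ) :
    freqQP ω (Function.update n i k) = freqQP ω n + (k - n i) * ω i := by
  have h : Function.update n i k = n + Pi.single i (k - n i) := by
    ext j; by_cases hj : j = i <;> simp [hj]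
  rw [h, freqQP_add]
  simp [freqQP, Pi.single_apply]

lemma abs_le_heightQP (n : Fin N → ℤ) (i : Fin N) : |(n i : ℝ)| ≤ heightQP n :=
  Real.abs_le_sqrt <| Finset.single_le_sum (f := fun j => ((n j : ℝ)) ^ 2)
    (fun _ _ => sq_nonneg _) (Finset.mem_univ i)

lemma heightQP_nonneg (n : Fin N → ℤ) : 0 ≤ heightQP n := Real.sqrt_nonneg _

lemma heightQP_le_of_abs_le {n : Fin N → ℤ} {C : ℝ} (hC : ∀ i, |(n i : ℝ)| ≤ C) :
    heightQP n ≤ √N * C := by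
  rcases N.eq_zero_or_pos with rfl | hN
  · simp [heightQP]
  have hC0 : 0 ≤ C := (abs_nonneg _).trans (hC ⟨0, hN⟩)
  rw [heightQP, ← Real.sqrt_sq hC0, ← Real.sqrt_mul (Nat.cast_nonneg _)]
  refine Real.sqrt_le_sqrt ?_
  calc ∑ i, ((n i : ℝ)) ^ 2 ≤ ∑ _i : Fin N, C ^ 2 :=
        Finset.sum_le_sum fun i _ => sq_le_sq' (abs_le.mp (hC i)).1 (abs_le.mp (hC i)).2
    _ = N * C ^ 2 := by simp

lemma tsum_weight_nonneg (s : ℝ) (f : (Fin N → ℤ) → ℂ) :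
    0 ≤ ∑' n, (1 + heightQP n) ^ (2 * s) * ‖f n‖ ^ 2 :=
  tsum_nonneg fun n =>
    mul_nonneg (Real.rpow_nonneg (by linarith [heightQP_nonneg n]) _) (sq_nonneg _)

end Lattice

lemma abs_sq_sub_sq_add_sq_sub_sq_le {f₁ f₂ f₃ c : ℝ} (h₁ : |f₁ - c| ≤ 1 / 2)
    (h₂ : |f₂ - c| ≤ 1 / 2) (h₃ : |f₃ - c| ≤ 1 / 2) :
    |f₁ ^ 2 - f₂ ^ 2 + f₃ ^ 2 - (f₁ - f₂ + f₃) ^ 2| ≤ 2 := by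
  have h₁₂ : |f₁ - f₂| ≤ 1 := by rw [abs_le] at *; constructor <;> linarith
  have h₂₃ : |f₂ - f₃| ≤ 1 := by rw [abs_le] at *; constructor <;> linarith
  calc |f₁ ^ 2 - f₂ ^ 2 + f₃ ^ 2 - (f₁ - f₂ + f₃) ^ 2| = 2 * (|f₁ - f₂| * |f₂ - f₃|) := by
        rw [← abs_mul, ← abs_two, ← abs_mul]; ring_nf
    _ ≤ 2 * (1 * 1) := by gcongr
    _ = 2 := by norm_num

lemma le_re_integral_exp_mul_I {t θ : ℝ} (ht : 0 ≤ t) (htθ : |t * θ| ≤ 1) :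
    t / 2 ≤ (∫ s in (0 : ℝ)..t, Complex.exp (Complex.I * ((s * θ : ℝ) : ℂ))).re := by
  have hcont : Continuous fun s : ℝ => Complex.exp (Complex.I * ((s * θ : ℝ) : ℂ)) := by
    fun_prop
  have hcomm :=
    Complex.reCLM.intervalIntegral_comp_comm (hcont.intervalIntegrable (μ := volume) 0 t)
  simp only [Complex.reCLM_apply] at hcomm
  rw [← hcomm]
  have hre : ∀ s : ℝ, (Complex.exp (Complex.I * ((s * θ : ℝ) : ℂ))).re = Real.cos (s * θ) := by
    intro s
    rw [mul_comm]
    exact Complex.exp_ofReal_mul_I_re _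
  simp_rw [hre]
  calc t / 2 = ∫ _ in (0 : ℝ)..t, (1 / 2 : ℝ) := by
        rw [intervalIntegral.integral_const, smul_eq_mul]; ring
    _ ≤ ∫ s in (0 : ℝ)..t, Real.cos (s * θ) := by
      refine intervalIntegral.integral_mono_on ht intervalIntegrable_const
        ((by fun_prop : Continuous fun s : ℝ => Real.cos (s * θ)).intervalIntegrable _ _) ?_
      intro s ⟨hs0, hst⟩
      have habs : |s * θ| ≤ 1 := htθ.trans' <| by
        rw [abs_mul, abs_mul, abs_of_nonneg hs0, abs_of_nonneg ht]; gcongr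
      linarith [(sq_le_one_iff_abs_le_one (s * θ)).mpr habs,
        Real.one_sub_sq_div_two_le_cos (x := s * θ)]

lemma le_sq_mul_pow_three_of_rpow_le {A B K : ℝ} (hA : 0 ≤ A) (hB : 0 ≤ B)
    (h : A ^ ((1 : ℝ) / 2) ≤ K * B ^ ((3 : ℝ) / 2)) : A ≤ K ^ 2 * B ^ 3 := by
  have h2 := pow_le_pow_left₀ (Real.rpow_nonneg hA _) h 2
  rwa [← Real.rpow_mul_natCast hA, mul_pow, ← Real.rpow_mul_natCast hB,
    show (1 : ℝ) / 2 * (2 : ℕ) = 1 by norm_num, show (3 : ℝ) / 2 * (2 : ℕ) = (3 : ℕ) by norm_num,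
    Real.rpow_one, Real.rpow_natCast] at h2

lemma not_forall_pow_le_mul_rpow {p : ℕ} {q : ℝ} (hpq : q < p) (C : ℝ) :
    ¬ ∀ L : ℕ, 1 ≤ L → (L : ℝ) ^ p ≤ C * (L : ℝ) ^ q := by
  intro h
  have htend : Tendsto (fun L : ℕ => (L : ℝ) ^ ((p : ℝ) - q)) atTop atTop :=
    (tendsto_rpow_atTop (sub_pos.mpr hpq)).comp tendsto_natCast_atTop_atTop
  obtain ⟨L, hLC, hL⟩ := ((htend.eventually_gt_atTop C).and (eventually_ge_atTop 1)).exists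
  have hx : (0 : ℝ) < L := by exact_mod_cast hL
  have hle := h L hL
  rw [← Real.rpow_natCast, ← sub_add_cancel (p : ℝ) q, Real.rpow_add hx] at hle
  exact lt_irrefl _ ((mul_lt_mul_of_pos_right hLC (Real.rpow_pos_of_pos hx q)).trans_le hle)

section TripleSums

variable {N : ℕ}

def tripleSums (S : Finset (Fin N → ℤ)) : Finset (Fin N → ℤ) :=
  (S ×ˢ S ×ˢ S).image fun m => m.1 - m.2.1 + m.2.2

def repCount (S : Finset (Fin N → ℤ)) (n : Fin N → ℤ) : ℕ :=
  ((S ×ˢ S ×ˢ S).filter fun m => m.1 - m.2.1 + m.2.2 = n).card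

lemma sum_repCount (S : Finset (Fin N → ℤ)) :
    ∑ n ∈ tripleSums S, repCount S n = S.card ^ 3 := by
  rw [pow_three, ← Finset.card_product, ← Finset.card_product,
    Finset.card_eq_sum_card_fiberwise fun m hm => Finset.mem_image_of_mem
      (fun m : (Fin N → ℤ) × (Fin N → ℤ) × (Fin N → ℤ) => m.1 - m.2.1 + m.2.2) hm]
  rfl

lemma picardCoeff_indicator (ω : Fin N → ℝ) (S : Finset (Fin N → ℤ)) (t : ℝ)
    (n : Fin N → ℤ) :
    picardCoeff ω ((S : Set (Fin N → ℤ)).indicator 1) t n =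
      ∑ m ∈ (S ×ˢ S ×ˢ S).filter (fun m => m.1 - m.2.1 + m.2.2 = n),
        ∫ s in (0 : ℝ)..t, Complex.exp (Complex.I *
          ((s * (freqQP ω m.1 ^ 2 - freqQP ω m.2.1 ^ 2 + freqQP ω m.2.2 ^ 2
            - freqQP ω n ^ 2) : ℝ) : ℂ)) := by
  rw [picardCoeff, Finset.sum_filter]
  refine (tsum_eq_sum fun m hm => ?_).trans (Finset.sum_congr rfl fun m hm => ?_)
  · simp only [Finset.mem_product, not_and_or] at hm
    rcases hm with h | h | h <;> simp [h]
  · simp only [Finset.mem_product] at hm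
    simp [hm.1, hm.2.1, hm.2.2]

lemma picardCoeff_indicator_eq_zero (ω : Fin N → ℝ) (S : Finset (Fin N → ℤ)) (t : ℝ)
    {n : Fin N → ℤ} (hn : n ∉ tripleSums S) :
    picardCoeff ω ((S : Set (Fin N → ℤ)).indicator 1) t n = 0 := by
  rw [picardCoeff_indicator, Finset.sum_eq_zero]
  intro m hm
  rw [Finset.mem_filter] at hm
  exact absurd (hm.2 ▸ Finset.mem_image_of_mem _ hm.1) hn

lemma repCount_div_six_le_re_picardCoeff (ω : Fin N → ℝ) {S : Finset (Fin N → ℤ)} {c : ℝ}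
    (hS : ∀ n ∈ S, |freqQP ω n - c| ≤ 1 / 2) (n : Fin N → ℤ) :
    (repCount S n : ℝ) / 6 ≤ (picardCoeff ω ((S : Set (Fin N → ℤ)).indicator 1) (1 / 3) n).re := by
  rw [picardCoeff_indicator, Complex.re_sum, repCount, div_eq_mul_one_div, ← nsmul_eq_mul,
    ← Finset.sum_const]
  refine Finset.sum_le_sum fun m hm => ?_
  obtain ⟨⟨h₁, h₂, h₃⟩, rfl⟩ : (m.1 ∈ S ∧ m.2.1 ∈ S ∧ m.2.2 ∈ S) ∧ m.1 - m.2.1 + m.2.2 = n := by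
    simpa only [Finset.mem_filter, Finset.mem_product] using hm
  rw [freqQP_add, freqQP_sub]
  refine (le_re_integral_exp_mul_I (by norm_num) ?_).trans_eq' (by norm_num)
  rw [abs_mul, abs_of_pos (by norm_num : (0 : ℝ) < 1 / 3)]
  linarith [abs_sq_sub_sq_add_sq_sub_sq_le (hS _ h₁) (hS _ h₂) (hS _ h₃)]

lemma tsum_mul_norm_indicator_sq (w : (Fin N → ℤ) → ℝ) (S : Finset (Fin N → ℤ)) :
    ∑' n, w n * ‖(S : Set (Fin N → ℤ)).indicator (1 : (Fin N → ℤ) → ℂ) n‖ ^ 2 =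
      ∑ n ∈ S, w n := by
  rw [tsum_eq_sum (s := S) fun n hn => by simp [hn]]
  exact Finset.sum_congr rfl fun n hn => by simp [hn]

lemma mul_card_pow_six_le_tsum_picardCoeff (ω : Fin N → ℝ) {S : Finset (Fin N → ℤ)} {c : ℝ}
    (hS : ∀ n ∈ S, |freqQP ω n - c| ≤ 1 / 2) {w : (Fin N → ℤ) → ℝ} {W : ℝ} (hW0 : 0 ≤ W)
    (hW : ∀ n ∈ tripleSums S, W ≤ w n) :
    W * (S.card : ℝ) ^ 6 ≤ 36 * (tripleSums S).card *
      ∑' n, w n * ‖picardCoeff ω ((S : Set (Fin N → ℤ)).indicator 1) (1 / 3) n‖ ^ 2 := by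
  set a := (S : Set (Fin N → ℤ)).indicator (1 : (Fin N → ℤ) → ℂ)
  have hterm : ∀ n ∈ tripleSums S,
      W * ((repCount S n : ℝ) / 6) ^ 2 ≤ w n * ‖picardCoeff ω a (1 / 3) n‖ ^ 2 := by
    intro n hn
    have hre := repCount_div_six_le_re_picardCoeff ω hS n
    have hnorm := hre.trans ((le_abs_self _).trans (Complex.abs_re_le_norm _))
    exact mul_le_mul (hW n hn) (pow_le_pow_left₀ (by positivity) hnorm 2) (by positivity)
      (hW0.trans (hW n hn))
  have hsum : ((S.card : ℝ) ^ 3) ^ 2 ≤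
      (tripleSums S).card * ∑ n ∈ tripleSums S, (repCount S n : ℝ) ^ 2 := by
    have := sq_sum_le_card_mul_sum_sq (s := tripleSums S) (f := fun n => (repCount S n : ℝ))
    rwa [← Nat.cast_sum, sum_repCount, Nat.cast_pow] at this
  rw [tsum_eq_sum fun n hn => by rw [picardCoeff_indicator_eq_zero ω S _ hn]; simp]
  calc W * (S.card : ℝ) ^ 6 = W * ((S.card : ℝ) ^ 3) ^ 2 := by ring
    _ ≤ W * ((tripleSums S).card * ∑ n ∈ tripleSums S, (repCount S n : ℝ) ^ 2) := by gcongr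
    _ = 36 * (tripleSums S).card * ∑ n ∈ tripleSums S, W * ((repCount S n : ℝ) / 6) ^ 2 := by
      simp only [div_pow, ← Finset.mul_sum, ← Finset.sum_div]; ring
    _ ≤ _ := mul_le_mul_of_nonneg_left (Finset.sum_le_sum hterm) (by positivity)

end TripleSums

section ResonantSet

variable {N : ℕ} [NeZero N] {ω : Fin N → ℝ} {s : ℝ} {L : ℕ}

def tailBox (I : Finset ℤ) : Finset (Fin N → ℤ) :=
  Fintype.piFinset fun i => if i = 0 then {0} else I

lemma mem_tailBox {I : Finset ℤ} {n : Fin N → ℤ} :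
    n ∈ tailBox I ↔ n 0 = 0 ∧ ∀ i, i ≠ 0 → n i ∈ I := by
  simp only [tailBox, Fintype.mem_piFinset]
  refine ⟨fun h => ⟨by simpa using h 0, fun i hi => by simpa [hi] using h i⟩, ?_⟩
  rintro ⟨h0, h⟩ i
  by_cases hi : i = 0
  · subst hi; simp [h0]
  · simpa [hi] using h i hi

lemma card_tailBox (I : Finset ℤ) : (tailBox (N := N) I).card = I.card ^ (N - 1) := by
  rw [tailBox, Fintype.card_piFinset, ← Finset.mul_prod_erase _ _ (Finset.mem_univ 0),
    Finset.prod_congr rfl fun i hi => by rw [if_neg (Finset.ne_of_mem_erase hi)]]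
  simp [Finset.card_erase_of_mem]

lemma card_le_of_abs_freqQP_sub_le (hω : 1 / 2 < ω 0) {A B : Finset (Fin N → ℤ)} {c : ℝ}
    (hB : ∀ n ∈ A, Function.update n 0 0 ∈ B) (hc : ∀ n ∈ A, |freqQP ω n - c| ≤ 3 / 2) :
    A.card ≤ 7 * B.card := by
  -- `n` is determined by its tail `p = update n 0 0` and by `n 0 + r p`, an integer within `1/2`
  -- of `(freqQP ω n - c) / ω 0 ∈ (-3, 3)`.
  set r : (Fin N → ℤ) → ℤ := fun p => round ((freqQP ω p - c) / ω 0)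
  have hmaps : ∀ n ∈ A, (Function.update n 0 0, n 0 + r (Function.update n 0 0)) ∈
      B ×ˢ Finset.Icc (-3 : ℤ) 3 := by
    intro n hn
    refine Finset.mem_product.mpr ⟨hB n hn, Finset.mem_Icc.mpr ?_⟩
    have hω0 : 0 < ω 0 := by linarith
    have hy : (n 0 : ℝ) + (freqQP ω (Function.update n 0 0) - c) / ω 0 =
        (freqQP ω n - c) / ω 0 := by
      rw [freqQP_update]; field_simp; push_cast; ring
    have hny : |(n 0 : ℝ) + (freqQP ω (Function.update n 0 0) - c) / ω 0| < 3 := by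
      rw [hy, abs_div, abs_of_pos hω0, div_lt_iff₀ hω0]
      linarith [hc n hn]
    have hr := abs_sub_round ((freqQP ω (Function.update n 0 0) - c) / ω 0)
    rw [abs_lt] at hny; rw [abs_le] at hr
    have hlo : (-4 : ℝ) < n 0 + r (Function.update n 0 0) := by simp only [r]; linarith
    have hhi : (n 0 + r (Function.update n 0 0) : ℝ) < 4 := by simp only [r]; linarith
    constructor
    · have : (-4 : ℤ) < n 0 + r (Function.update n 0 0) := by exact_mod_cast hlo
      omega
    · have : n 0 + r (Function.update n 0 0) < (4 : ℤ) := by exact_mod_cast hhi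
      omega
  have hinj : Set.InjOn (fun n => (Function.update n 0 0, n 0 + r (Function.update n 0 0))) A := by
    intro n _ n' _ h
    simp only [Prod.mk.injEq] at h
    obtain ⟨hp, h0⟩ := h
    rw [hp] at h0
    rw [← Function.update_eq_self 0 n, ← Function.update_eq_self 0 n',
      ← Function.update_idem (0 : ℤ) (n 0) n, ← Function.update_idem (0 : ℤ) (n' 0) n', hp,
      show n 0 = n' 0 by omega]
  calc A.card ≤ (B ×ˢ Finset.Icc (-3 : ℤ) 3).card := Finset.card_le_card_of_injOn _ hmaps hinj
    _ = 7 * B.card := by simp [mul_comm]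

noncomputable def liftToShell (ω : Fin N → ℝ) (T : ℤ) (m : Fin N → ℤ) : Fin N → ℤ :=
  Function.update m 0 (T - round (freqQP ω m / ω 0))

noncomputable def resonantSet (ω : Fin N → ℝ) (L : ℕ) : Finset (Fin N → ℤ) :=
  (tailBox (Finset.Ico 0 (L : ℤ))).image (liftToShell ω (10 * N * L))

lemma card_resonantSet : (resonantSet ω L).card = L ^ (N - 1) := by
  have hproj : ∀ m ∈ tailBox (Finset.Ico 0 (L : ℤ)),
      Function.update (liftToShell ω (10 * N * L) m) 0 0 = m := fun m hm => by
    rw [liftToShell, Function.update_idem, ← (mem_tailBox.mp hm).1, Function.update_eq_self]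
  rw [resonantSet, Finset.card_image_of_injOn fun m hm m' hm' h => by
    rw [← hproj m hm, ← hproj m' hm', h], card_tailBox, Int.card_Ico]
  simp

lemma freqQP_mem_Icc_of_mem_tailBox (hω : ∀ i, ω i ∈ Set.Ioc (1 / 2 : ℝ) 1) {m : Fin N → ℤ}
    (hm : m ∈ tailBox (Finset.Ico 0 (L : ℤ))) : freqQP ω m ∈ Set.Icc 0 (N * L : ℝ) := by
  obtain ⟨h0, h⟩ := mem_tailBox.mp hm
  have hcoord : ∀ i, 0 ≤ (m i : ℝ) ∧ (m i : ℝ) ≤ L := fun i => by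
    by_cases hi : i = 0
    · subst hi; simp [h0]
    · obtain ⟨hlo, hhi⟩ := Finset.mem_Ico.mp (h i hi)
      exact ⟨by exact_mod_cast hlo, by exact_mod_cast hhi.le⟩
  have hterm : ∀ i, 0 ≤ (m i : ℝ) * ω i ∧ (m i : ℝ) * ω i ≤ L := fun i => by
    obtain ⟨h1, h2⟩ := hω i
    obtain ⟨h3, h4⟩ := hcoord i
    exact ⟨by nlinarith, by nlinarith⟩
  refine ⟨Finset.sum_nonneg fun i _ => (hterm i).1, ?_⟩
  calc freqQP ω m ≤ ∑ _i : Fin N, (L : ℝ) := Finset.sum_le_sum fun i _ => (hterm i).2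
    _ = N * L := by simp

lemma abs_freqQP_sub_le_of_mem_resonantSet (hω : ∀ i, ω i ∈ Set.Ioc (1 / 2 : ℝ) 1)
    {n : Fin N → ℤ} (hn : n ∈ resonantSet ω L) :
    |freqQP ω n - (10 * N * L : ℤ) * ω 0| ≤ 1 / 2 := by
  obtain ⟨m, hm, rfl⟩ := Finset.mem_image.mp hn
  obtain ⟨h1, h2⟩ := hω 0
  set x := freqQP ω m / ω 0
  have hfreq : freqQP ω (liftToShell ω (10 * N * L) m) - (10 * N * L : ℤ) * ω 0 =
      (x - round x) * ω 0 := by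
    rw [liftToShell, freqQP_update, (mem_tailBox.mp hm).1]
    simp only [x]; field_simp; push_cast; ring
  rw [hfreq, abs_mul, abs_of_pos (by linarith : 0 < ω 0)]
  nlinarith [abs_sub_round x, abs_nonneg (x - round x)]

lemma coord_mem_of_mem_resonantSet (hω : ∀ i, ω i ∈ Set.Ioc (1 / 2 : ℝ) 1) {n : Fin N → ℤ}
    (hn : n ∈ resonantSet ω L) :
    (∀ i, i ≠ 0 → n i ∈ Finset.Ico 0 (L : ℤ)) ∧ n 0 ∈ Finset.Icc (8 * N * L : ℤ) (10 * N * L) := by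
  obtain ⟨m, hm, rfl⟩ := Finset.mem_image.mp hn
  refine ⟨fun i hi => ?_, ?_⟩
  · rw [liftToShell, Function.update_of_ne hi]
    exact (mem_tailBox.mp hm).2 i hi
  obtain ⟨hf0, hf⟩ := freqQP_mem_Icc_of_mem_tailBox hω hm
  obtain ⟨h1, h2⟩ := hω 0
  have hx0 : 0 ≤ freqQP ω m / ω 0 := div_nonneg hf0 (by linarith)
  have hx : freqQP ω m / ω 0 ≤ 2 * N * L := by
    rw [div_le_iff₀ (by linarith)]; nlinarith [(by positivity : (0 : ℝ) ≤ N * L)]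
  have hlo : (-1 : ℝ) < round (freqQP ω m / ω 0) := by
    linarith [sub_half_lt_round (freqQP ω m / ω 0)]
  have hhi : (round (freqQP ω m / ω 0) : ℝ) < ((2 * N * L + 1 : ℤ) : ℝ) := by
    push_cast; linarith [round_le_add_half (freqQP ω m / ω 0)]
  have hlo' : (-1 : ℤ) < round (freqQP ω m / ω 0) := by exact_mod_cast hlo
  have hhi' := Int.cast_lt.mp hhi
  rw [liftToShell, Function.update_self, Finset.mem_Icc]
  constructor <;> linarith

lemma bounds_of_mem_tripleSums_resonantSet (hω : ∀ i, ω i ∈ Set.Ioc (1 / 2 : ℝ) 1)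
    {n : Fin N → ℤ} (hn : n ∈ tripleSums (resonantSet ω L)) :
    |freqQP ω n - (10 * N * L : ℤ) * ω 0| ≤ 3 / 2 ∧
      (∀ i, i ≠ 0 → n i ∈ Finset.Icc (-(L : ℤ)) (2 * L)) ∧ (L : ℤ) ≤ n 0 := by
  obtain ⟨⟨x, y, z⟩, hm, rfl⟩ := Finset.mem_image.mp hn
  simp only [Finset.mem_product] at hm
  obtain ⟨hx, hy, hz⟩ := hm
  have hfx := abs_freqQP_sub_le_of_mem_resonantSet hω hx
  have hfy := abs_freqQP_sub_le_of_mem_resonantSet hω hy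
  have hfz := abs_freqQP_sub_le_of_mem_resonantSet hω hz
  obtain ⟨hcx, hx0⟩ := coord_mem_of_mem_resonantSet hω hx
  obtain ⟨hcy, hy0⟩ := coord_mem_of_mem_resonantSet hω hy
  obtain ⟨hcz, hz0⟩ := coord_mem_of_mem_resonantSet hω hz
  refine ⟨?_, fun i hi => ?_, ?_⟩
  · rw [freqQP_add, freqQP_sub]
    rw [abs_le] at *
    constructor <;> linarith
  · have h₁ := hcx i hi; have h₂ := hcy i hi; have h₃ := hcz i hi
    simp only [Finset.mem_Ico, Finset.mem_Icc, Pi.add_apply, Pi.sub_apply] at h₁ h₂ h₃ ⊢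
    omega
  · simp only [Finset.mem_Icc, Pi.add_apply, Pi.sub_apply] at hx0 hy0 hz0 ⊢
    have hLN : (L : ℤ) ≤ N * L :=
      le_mul_of_one_le_left (by positivity) (by exact_mod_cast NeZero.one_le)
    linarith

lemma card_tripleSums_resonantSet_le (hω : ∀ i, ω i ∈ Set.Ioc (1 / 2 : ℝ) 1) :
    (tripleSums (resonantSet ω L)).card ≤ 7 * (3 * L + 1) ^ (N - 1) := by
  have hB : ∀ n ∈ tripleSums (resonantSet ω L),
      Function.update n 0 0 ∈ tailBox (Finset.Icc (-(L : ℤ)) (2 * L)) := fun n hn =>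
    mem_tailBox.mpr ⟨Function.update_self .., fun i hi => by
      rw [Function.update_of_ne hi]; exact (bounds_of_mem_tripleSums_resonantSet hω hn).2.1 i hi⟩
  refine (card_le_of_abs_freqQP_sub_le (hω 0).1 hB
    fun n hn => (bounds_of_mem_tripleSums_resonantSet hω hn).1).trans_eq ?_
  rw [card_tailBox, Int.card_Icc]
  congr 2
  omega

lemma one_add_heightQP_le_of_mem_resonantSet (hω : ∀ i, ω i ∈ Set.Ioc (1 / 2 : ℝ) 1)
    (hL : 1 ≤ L) {n : Fin N → ℤ} (hn : n ∈ resonantSet ω L) :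
    1 + heightQP n ≤ (1 + 10 * N * √N) * L := by
  obtain ⟨htail, h0⟩ := coord_mem_of_mem_resonantSet hω hn
  have hcoord : ∀ i, |(n i : ℝ)| ≤ 10 * N * L := fun i => by
    have : 0 ≤ n i ∧ n i ≤ 10 * N * L := by
      by_cases hi : i = 0
      · subst hi; rw [Finset.mem_Icc] at h0; constructor <;> nlinarith
      · have := Finset.mem_Ico.mp (htail i hi)
        have : (L : ℤ) ≤ 10 * N * L :=
          le_mul_of_one_le_left (by positivity) (by linarith [(NeZero.one_le : 1 ≤ N)])
        omega
    have habs : |n i| ≤ 10 * N * L := abs_le.mpr ⟨by linarith, this.2⟩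
    exact_mod_cast habs
  have hL' : (1 : ℝ) ≤ L := by exact_mod_cast hL
  nlinarith [heightQP_le_of_abs_le hcoord, Real.sqrt_nonneg N]

lemma le_one_add_heightQP_of_mem_tripleSums_resonantSet (hω : ∀ i, ω i ∈ Set.Ioc (1 / 2 : ℝ) 1)
    {n : Fin N → ℤ} (hn : n ∈ tripleSums (resonantSet ω L)) : (L : ℝ) ≤ 1 + heightQP n := by
  have h0 : (L : ℝ) ≤ n 0 := by exact_mod_cast (bounds_of_mem_tripleSums_resonantSet hω hn).2.2
  linarith [le_abs_self (n 0 : ℝ), abs_le_heightQP n 0]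

lemma tsum_weight_indicator_resonantSet_le (hω : ∀ i, ω i ∈ Set.Ioc (1 / 2 : ℝ) 1)
    (hs0 : 0 ≤ s) (hL : 1 ≤ L) :
    ∑' n, (1 + heightQP n) ^ (2 * s) *
        ‖(resonantSet ω L : Set (Fin N → ℤ)).indicator (1 : (Fin N → ℤ) → ℂ) n‖ ^ 2 ≤
      (L : ℝ) ^ (N - 1) * ((1 + 10 * N * √N) * L) ^ (2 * s) := by
  rw [tsum_mul_norm_indicator_sq, ← Nat.cast_pow, ← card_resonantSet (ω := ω), ← nsmul_eq_mul]
  refine Finset.sum_le_card_nsmul _ _ _ fun n hn => Real.rpow_le_rpow ?_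
    (one_add_heightQP_le_of_mem_resonantSet hω hL hn) (by linarith)
  linarith [heightQP_nonneg n]

lemma rpow_mul_pow_le_tsum_weight_picardCoeff (hω : ∀ i, ω i ∈ Set.Ioc (1 / 2 : ℝ) 1)
    (hs0 : 0 ≤ s) (hL : 1 ≤ L) :
    (L : ℝ) ^ (2 * s) * (L : ℝ) ^ (5 * (N - 1)) ≤ 252 * 4 ^ (N - 1) *
      ∑' n, (1 + heightQP n) ^ (2 * s) *
        ‖picardCoeff ω ((resonantSet ω L : Set (Fin N → ℤ)).indicator 1) (1 / 3) n‖ ^ 2 := by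
  have hx : (1 : ℝ) ≤ L := by exact_mod_cast hL
  have hlow := mul_card_pow_six_le_tsum_picardCoeff ω
    (fun n hn => abs_freqQP_sub_le_of_mem_resonantSet hω hn) (Real.rpow_nonneg (by linarith) _)
    (w := fun n => (1 + heightQP n) ^ (2 * s)) fun n hn =>
      Real.rpow_le_rpow (by linarith) (le_one_add_heightQP_of_mem_tripleSums_resonantSet hω hn)
        (by linarith)
  rw [card_resonantSet, Nat.cast_pow] at hlow
  have hcard : ((tripleSums (resonantSet ω L)).card : ℝ) ≤ 7 * 4 ^ (N - 1) * (L : ℝ) ^ (N - 1) := by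
    calc ((tripleSums (resonantSet ω L)).card : ℝ) ≤ 7 * (3 * L + 1 : ℝ) ^ (N - 1) := by
          exact_mod_cast card_tripleSums_resonantSet_le hω
      _ ≤ 7 * (4 * L : ℝ) ^ (N - 1) := by gcongr; linarith
      _ = 7 * 4 ^ (N - 1) * (L : ℝ) ^ (N - 1) := by ring
  have hA := tsum_weight_nonneg s
    (picardCoeff ω ((resonantSet ω L : Set (Fin N → ℤ)).indicator 1) (1 / 3))
  refine le_of_mul_le_mul_left ?_ (pow_pos (by linarith : (0 : ℝ) < L) (N - 1))
  calc (L : ℝ) ^ (N - 1) * ((L : ℝ) ^ (2 * s) * (L : ℝ) ^ (5 * (N - 1)))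
      = (L : ℝ) ^ (2 * s) * ((L : ℝ) ^ (N - 1)) ^ 6 := by ring
    _ ≤ 36 * (7 * 4 ^ (N - 1) * (L : ℝ) ^ (N - 1)) * _ := hlow.trans (by gcongr)
    _ = _ := by ring

lemma pow_le_of_picard_bound (hω : ∀ i, ω i ∈ Set.Ioc (1 / 2 : ℝ) 1) {K : ℝ} (hs0 : 0 ≤ s)
    (hL : 1 ≤ L)
    (h : (∑' n, (1 + heightQP n) ^ (2 * s) *
        ‖picardCoeff ω ((resonantSet ω L : Set (Fin N → ℤ)).indicator 1) (1 / 3) n‖ ^ 2) ^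
          ((1 : ℝ) / 2) ≤
      K * (∑' n, (1 + heightQP n) ^ (2 * s) *
        ‖(resonantSet ω L : Set (Fin N → ℤ)).indicator (1 : (Fin N → ℤ) → ℂ) n‖ ^ 2) ^
          ((3 : ℝ) / 2)) :
    (L : ℝ) ^ (2 * (N - 1)) ≤
      252 * 4 ^ (N - 1) * K ^ 2 * (1 + 10 * N * √N) ^ (6 * s) * (L : ℝ) ^ (4 * s) := by
  have hx : (1 : ℝ) ≤ L := by exact_mod_cast hL
  have hB0 :=
    tsum_weight_nonneg s ((resonantSet ω L : Set (Fin N → ℤ)).indicator (1 : (Fin N → ℤ) → ℂ))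
  have hsq := le_sq_mul_pow_three_of_rpow_le (tsum_weight_nonneg _ _) hB0 h
  have hlow := rpow_mul_pow_le_tsum_weight_picardCoeff hω hs0 hL
  have hup := tsum_weight_indicator_resonantSet_le hω hs0 hL
  generalize ∑' n, (1 + heightQP n) ^ (2 * s) * _ = A at hsq hlow
  generalize ∑' n, (1 + heightQP n) ^ (2 * s) * _ = B at hsq hup hB0
  have hD : (0 : ℝ) ≤ 1 + 10 * N * √N := by positivity
  rw [Real.mul_rpow hD (by linarith)] at hup
  rw [show 6 * s = 2 * s * (3 : ℕ) by push_cast; ring,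
    show 4 * s = 2 * s * (2 : ℕ) by push_cast; ring,
    Real.rpow_mul_natCast hD, Real.rpow_mul_natCast (by linarith)]
  refine le_of_mul_le_mul_left ?_ (by positivity : 0 < (L : ℝ) ^ (2 * s) * (L : ℝ) ^ (3 * (N - 1)))
  calc (L : ℝ) ^ (2 * s) * (L : ℝ) ^ (3 * (N - 1)) * (L : ℝ) ^ (2 * (N - 1))
      = (L : ℝ) ^ (2 * s) * (L : ℝ) ^ (5 * (N - 1)) := by ring
    _ ≤ 252 * 4 ^ (N - 1) * (K ^ 2 * B ^ 3) := hlow.trans (by gcongr)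
    _ ≤ 252 * 4 ^ (N - 1) * (K ^ 2 * ((L : ℝ) ^ (N - 1) *
          ((1 + 10 * N * √N) ^ (2 * s) * (L : ℝ) ^ (2 * s))) ^ 3) := by
      gcongr
    _ = _ := by ring

end ResonantSet

theorem picard_iterate_unbounded_general
    (ν : ℕ) (hν : 2 ≤ ν) (ω : Fin ν → ℝ)
    (hω : ∀ i, ω i ∈ Set.Ioc (1 / 2 : ℝ) 1)
    (s : ℝ) (hs0 : 0 ≤ s) (hs : s < ((ν : ℝ) - 1) / 2) :
    ¬ ∃ K : ℝ, 0 < K ∧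
      ∀ a : (Fin ν → ℤ) → ℂ, (Function.support a).Finite →
      ∀ t ∈ Set.Icc (0 : ℝ) 1,
        (∑' n : Fin ν → ℤ, (1 + heightQP n) ^ (2 * s) *
            ‖picardCoeff ω a t n‖ ^ 2) ^ ((1 : ℝ) / 2)
          ≤ K * (∑' n : Fin ν → ℤ, (1 + heightQP n) ^ (2 * s) *
              ‖a n‖ ^ 2) ^ ((3 : ℝ) / 2) := by
  rintro ⟨K, -, hbound⟩
  have : NeZero ν := ⟨by omega⟩
  have hexp : 4 * s < ((2 * (ν - 1) : ℕ) : ℝ) := by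
    rw [Nat.cast_mul, Nat.cast_sub (by omega)]; push_cast; linarith
  exact not_forall_pow_le_mul_rpow hexp _ fun L hL => pow_le_of_picard_bound hω hs0 hL <|
    hbound _ ((resonantSet ω L).finite_toSet.subset Set.support_indicator_subset) _
      ⟨by norm_num, by norm_num⟩

/-- Failure of the first Picard iterate bound for the cubic NLS with quasi-periodic
data in `𝓗^s_Λ` for `0 ≤ s < b/2` (Proposition 6.2 in dimension `d = 1`): there is
no constant `K` bounding the `𝓗^s`-norm of the first Picard iterate on `[0,1]` by
`K ‖a‖³_{𝓗^s}`. -/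
theorem picard_iterate_unbounded
    (ν : ℕ) (hν : 2 ≤ ν) (ω : Fin ν → ℝ)
    (hω : ∀ i, ω i ∈ Set.Ioc (1 / 2 : ℝ) 1)
    (hnr : ∀ n : Fin ν → ℤ, freqQP ω n = 0 → n = 0)
    (s : ℝ) (hs0 : 0 ≤ s) (hs : s < ((ν : ℝ) - 1) / 2) :
    ¬ ∃ K : ℝ, 0 < K ∧
      ∀ a : (Fin ν → ℤ) → ℂ, (Function.support a).Finite →
      ∀ t ∈ Set.Icc (0 : ℝ) 1,
        (∑' n : Fin ν → ℤ, (1 + heightQP n) ^ (2 * s) *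
            ‖picardCoeff ω a t n‖ ^ 2) ^ ((1 : ℝ) / 2)
          ≤ K * (∑' n : Fin ν → ℤ, (1 + heightQP n) ^ (2 * s) *
              ‖a n‖ ^ 2) ^ ((3 : ℝ) / 2) :=
  picard_iterate_unbounded_general ν hν ω hω s hs0 hs
end
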